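/- Let n ≥ 3 be an integer. The lines L_0, …, L_{n−1} of the Böröczky configuration are pairwise distinct, and for pairwise distinct indices i, j, k ∈ {0, …, n−1}, the three lines L_i, L_j, L_k have a common point (are concurrent) if and only if n divides i + j + k. -/
import Mathlib


open Complex

/-- `P n j = exp(2πij/n)`. -/
noncomputable def Ppt (n j : ℕ) : ℂ := Complex.exp (2 * Real.pi * Complex.I * j / n)

/-- `Q n j = -exp(-4πij/n)`. -/
noncomputable def Qpt (n j : ℕ) : ℂ := -Complex.exp (-(4 * Real.pi * Complex.I * j) / n)

open scoped Classical in
/-- The `j`-th line of the Böröczky configuration: the line through `P n j` and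
`Q n j` if they are distinct, and the tangent line to the unit circle at `P n j`
otherwise (identifying ℝ² with ℂ). -/
noncomputable def Bline (n j : ℕ) : Set ℂ :=
  if Ppt n j = Qpt n j then
    {z : ℂ | (z * (starRingEnd ℂ) (Ppt n j)).re = 1}
  else
    {z : ℂ | ((z - Ppt n j) * (starRingEnd ℂ) (Qpt n j - Ppt n j)).im = 0}

/-- The set of triple points of the Böröczky configuration: points lying on at
least three of the lines `L_0, …, L_{n-1}`. -/
def TriplePts (n : ℕ) : Set ℂ :=
  {z : ℂ | 3 ≤ ({j : ℕ | j < n ∧ z ∈ Bline n j} : Set ℕ).ncard}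

/- ### Auxiliary lemmas -/

private lemma re_eq_one_iff (w : ℂ) : w.re = 1 ↔ w + (starRingEnd ℂ) w = 2 := by
  rw [Complex.add_conj]
  constructor
  · intro h; rw [h]; norm_num
  · intro h
    have h2 : ((2 * w.re : ℝ) : ℂ) = ((2 : ℝ) : ℂ) := by rw [h]; norm_num
    have := Complex.ofReal_inj.mp h2
    linarith

private lemma tangent_iff (u u' z z' : ℂ) (hu : u * u' = 1) (ht : u = -u' ^ 2) :
    z * u' + z' * u = 2 ↔ z - u' * z' = u - u' ^ 2 := by
  constructor
  · intro hE
    linear_combination u * hE + (u' * z' - z) * hu + (1 - u * z') * ht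
  · intro hA
    linear_combination u' * hA + (z' - u') * ht + 2 * hu

private lemma chord_iff (u u' z z' : ℂ) (hu : u * u' = 1) (hne : u ≠ -u' ^ 2) :
    (z' - u') * (-u' ^ 2 - u) = (z - u) * (-u ^ 2 - u') ↔ z - u' * z' = u - u' ^ 2 := by
  have h2 : u ^ 2 + u' ≠ 0 := by
    intro h0
    exact hne (by linear_combination u' * h0 - u * hu)
  have key : (z' - u') * (-u' ^ 2 - u) - (z - u) * (-u ^ 2 - u') =
      (u ^ 2 + u') * ((z - u' * z') - (u - u' ^ 2)) := by
    linear_combination (u * (z' - u')) * hu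
  constructor
  · intro h
    have h3 : (u ^ 2 + u') * ((z - u' * z') - (u - u' ^ 2)) = 0 := by
      rw [← key, h]; ring
    exact sub_eq_zero.mp ((mul_eq_zero.mp h3).resolve_left h2)
  · intro h
    have h4 : (z - u' * z') - (u - u' ^ 2) = 0 := sub_eq_zero.mpr h
    have h5 := key.trans (by rw [h4, mul_zero])
    exact sub_eq_zero.mp h5

private lemma conj_arg (n j : ℕ) :
    (starRingEnd ℂ) (2 * (Real.pi : ℂ) * Complex.I * (j : ℂ) / (n : ℂ))
      = -(2 * (Real.pi : ℂ) * Complex.I * (j : ℂ) / (n : ℂ)) := by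
  simp only [map_div₀, map_mul, Complex.conj_I, Complex.conj_ofReal, map_natCast, map_ofNat]
  ring

private lemma Ppt_mul_conj (n j : ℕ) : Ppt n j * (starRingEnd ℂ) (Ppt n j) = 1 := by
  rw [Ppt, ← Complex.exp_conj, conj_arg, ← Complex.exp_add, add_neg_cancel, Complex.exp_zero]

private lemma Qpt_eq (n j : ℕ) : Qpt n j = -((starRingEnd ℂ) (Ppt n j)) ^ 2 := by
  rw [Qpt, Ppt, ← Complex.exp_conj, conj_arg, ← Complex.exp_nat_mul, neg_inj]
  congr 1
  push_cast
  ring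

private lemma Bline_eq (n j : ℕ) :
    Bline n j = {z : ℂ | z - (starRingEnd ℂ) (Ppt n j) * (starRingEnd ℂ) z
      = Ppt n j - ((starRingEnd ℂ) (Ppt n j)) ^ 2} := by
  classical
  have hu : Ppt n j * (starRingEnd ℂ) (Ppt n j) = 1 := Ppt_mul_conj n j
  have hQ : Qpt n j = -((starRingEnd ℂ) (Ppt n j)) ^ 2 := Qpt_eq n j
  rw [Bline]
  split_ifs with h
  · rw [hQ] at h
    ext z
    simp only [Set.mem_setOf_eq]
    rw [re_eq_one_iff, map_mul, Complex.conj_conj]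
    exact tangent_iff (Ppt n j) ((starRingEnd ℂ) (Ppt n j)) z ((starRingEnd ℂ) z) hu h
  · rw [hQ] at h
    ext z
    simp only [Set.mem_setOf_eq]
    rw [← Complex.conj_eq_iff_im]
    have h1 : (starRingEnd ℂ) (Qpt n j - Ppt n j)
        = -(Ppt n j) ^ 2 - (starRingEnd ℂ) (Ppt n j) := by
      rw [hQ, map_sub, map_neg, map_pow, Complex.conj_conj]
    have h2 : (starRingEnd ℂ) ((z - Ppt n j) * ((starRingEnd ℂ) (Qpt n j - Ppt n j)))
        = ((starRingEnd ℂ) z - (starRingEnd ℂ) (Ppt n j))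
          * (-((starRingEnd ℂ) (Ppt n j)) ^ 2 - Ppt n j) := by
      rw [map_mul, Complex.conj_conj, map_sub, hQ]
    rw [h2, h1]
    exact chord_iff (Ppt n j) ((starRingEnd ℂ) (Ppt n j)) z ((starRingEnd ℂ) z) hu h

private lemma lines_ne (u u' v v' : ℂ) (hu : u * u' = 1) (hv : v * v' = 1)
    (hcu : (starRingEnd ℂ) u = u') (hcu' : (starRingEnd ℂ) u' = u)
    (hcv : (starRingEnd ℂ) v = v') (hcv' : (starRingEnd ℂ) v' = v)
    (huv : u ≠ v)
    (heq : ({z : ℂ | z - u' * (starRingEnd ℂ) z = u - u' ^ 2} : Set ℂ)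
      = {z : ℂ | z - v' * (starRingEnd ℂ) z = v - v' ^ 2}) : False := by
  have c0 : (starRingEnd ℂ) (u + v + u' * v') = u' + v' + u * v := by
    simp only [map_add, map_mul, hcu, hcv, hcu', hcv']
  have c1 : (starRingEnd ℂ) (u + v + u' * v' + (1 + u')) = u' + v' + u * v + (1 + u) := by
    simp only [map_add, map_mul, map_one, hcu, hcv, hcu', hcv']
  have c2 : (starRingEnd ℂ) (u + v + u' * v' + Complex.I * (1 - u'))
      = u' + v' + u * v - Complex.I * (1 - u) := by
    simp only [map_add, map_sub, map_mul, map_one, Complex.conj_I, hcu, hcv, hcu', hcv']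
    ring
  have m0v : (u + v + u' * v') ∈ {z : ℂ | z - v' * (starRingEnd ℂ) z = v - v' ^ 2} := by
    simp only [Set.mem_setOf_eq, c0]
    linear_combination (-u) * hv
  have m1u : (u + v + u' * v' + (1 + u'))
      ∈ {z : ℂ | z - u' * (starRingEnd ℂ) z = u - u' ^ 2} := by
    simp only [Set.mem_setOf_eq, c1]
    linear_combination (-v - 1) * hu
  have m2u : (u + v + u' * v' + Complex.I * (1 - u'))
      ∈ {z : ℂ | z - u' * (starRingEnd ℂ) z = u - u' ^ 2} := by
    simp only [Set.mem_setOf_eq, c2]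
    linear_combination (-v - Complex.I) * hu
  rw [heq] at m1u m2u
  simp only [Set.mem_setOf_eq, c0, c1, c2] at m0v m1u m2u
  have e1 : (1 + u') - v' * (1 + u) = 0 := by linear_combination m1u - m0v
  have e2 : Complex.I * ((1 - u') + v' * (1 - u)) = 0 := by linear_combination m2u - m0v
  have e2' : (1 - u') + v' * (1 - u) = 0 :=
    (mul_eq_zero.mp e2).resolve_left Complex.I_ne_zero
  have h12 : v' * u = 1 := by
    linear_combination (-1 / 2 : ℂ) * e1 + (-1 / 2 : ℂ) * e2'
  exact huv (by linear_combination v * h12 - u * hv)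

private lemma concurrency_core (u u' v v' w w' : ℂ)
    (hu : u * u' = 1) (hv : v * v' = 1) (hw : w * w' = 1)
    (hcu : (starRingEnd ℂ) u = u') (hcu' : (starRingEnd ℂ) u' = u)
    (hcv : (starRingEnd ℂ) v = v') (hcv' : (starRingEnd ℂ) v' = v)
    (hcw : (starRingEnd ℂ) w = w') (hcw' : (starRingEnd ℂ) w' = w)
    (huv : u ≠ v) (hwu : w ≠ u) (hwv : w ≠ v) :
    (∃ z : ℂ, z ∈ ({z : ℂ | z - u' * (starRingEnd ℂ) z = u - u' ^ 2} : Set ℂ)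
      ∧ z ∈ ({z : ℂ | z - v' * (starRingEnd ℂ) z = v - v' ^ 2} : Set ℂ)
      ∧ z ∈ ({z : ℂ | z - w' * (starRingEnd ℂ) z = w - w' ^ 2} : Set ℂ))
      ↔ u * v * w = 1 := by
  have c0 : (starRingEnd ℂ) (u + v + u' * v') = u' + v' + u * v := by
    simp only [map_add, map_mul, hcu, hcv, hcu', hcv']
  constructor
  · rintro ⟨z, h1, h2, h3⟩
    simp only [Set.mem_setOf_eq] at h1 h2 h3
    have hvu' : v' - u' ≠ 0 := by
      intro h0
      apply huv
      have hv'u' : v' = u' := by linear_combination h0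
      rw [← hcu', ← hcv', hv'u']
    have key : (v' - u') * ((starRingEnd ℂ) z - (u' + v' + u * v)) = 0 := by
      linear_combination h1 - h2 + v * hu - u * hv
    have hz' : (starRingEnd ℂ) z = u' + v' + u * v :=
      sub_eq_zero.mp ((mul_eq_zero.mp key).resolve_left hvu')
    have hz : z = u + v + u' * v' := by
      have h4 := congrArg (starRingEnd ℂ) hz'
      rw [Complex.conj_conj] at h4
      rw [h4]
      simp only [map_add, map_mul, hcu, hcv, hcu', hcv']
    rw [hz', hz] at h3
    have key2 : (u * v * w - 1) * ((w - u) * (w - v)) = 0 := by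
      linear_combination (-(u * v * w ^ 2)) * h3 + (v * v' * w ^ 2 - v * w ^ 2 * w') * hu
        + (w ^ 2 - u * w ^ 2 * w') * hv
        + (-(v * w) - u * w + u * v + u * v * w * w' - u ^ 2 * v ^ 2 * w) * hw
    have h5 := (mul_eq_zero.mp key2).resolve_right
      (mul_ne_zero (sub_ne_zero.mpr hwu) (sub_ne_zero.mpr hwv))
    linear_combination h5
  · intro ht
    refine ⟨u + v + u' * v', ?_, ?_, ?_⟩ <;> simp only [Set.mem_setOf_eq, c0]
    · linear_combination (-v) * hu
    · linear_combination (-u) * hv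
    · have hwp : w' = u * v := by linear_combination (-w') * ht + (u * v) * hw
      have hwq : w = u' * v' := by
        linear_combination (u' * v') * ht - (w * v * v') * hu - w * hv
      rw [hwp, hwq]
      linear_combination (-v) * hu + (-u) * hv

/-- The lines of the Böröczky configuration are pairwise distinct, and three
lines `L_i, L_j, L_k` (with `i, j, k` pairwise distinct) are concurrent iff
`n ∣ i + j + k`. -/
theorem boroczky_lines_distinct_and_concurrency (n : ℕ) (hn : 3 ≤ n) :
    (∀ i j, i < n → j < n → i ≠ j → Bline n i ≠ Bline n j) ∧
    (∀ i j k, i < n → j < n → k < n → i ≠ j → i ≠ k → j ≠ k →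
      ((∃ z : ℂ, z ∈ Bline n i ∧ z ∈ Bline n j ∧ z ∈ Bline n k) ↔ n ∣ i + j + k)) := by
  have hn0 : n ≠ 0 := by omega
  have hprim : IsPrimitiveRoot (Complex.exp (2 * Real.pi * Complex.I / n)) n :=
    Complex.isPrimitiveRoot_exp n hn0
  have hP : ∀ m : ℕ, Ppt n m = Complex.exp (2 * Real.pi * Complex.I / n) ^ m := by
    intro m
    rw [Ppt, ← Complex.exp_nat_mul]
    congr 1
    ring
  have hPne : ∀ a b : ℕ, a < n → b < n → a ≠ b → Ppt n a ≠ Ppt n b := by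
    intro a b ha hb hab h
    exact hab (hprim.pow_inj ha hb (by rw [← hP a, ← hP b]; exact h))
  constructor
  · intro i j hi hj hij heq
    rw [Bline_eq, Bline_eq] at heq
    exact lines_ne (Ppt n i) _ (Ppt n j) _ (Ppt_mul_conj n i) (Ppt_mul_conj n j)
      rfl (Complex.conj_conj _) rfl (Complex.conj_conj _) (hPne i j hi hj hij) heq
  · intro i j k hi hj hk hij hik hjk
    rw [Bline_eq, Bline_eq, Bline_eq]
    rw [concurrency_core (Ppt n i) _ (Ppt n j) _ (Ppt n k) _
      (Ppt_mul_conj n i) (Ppt_mul_conj n j) (Ppt_mul_conj n k)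
      rfl (Complex.conj_conj _) rfl (Complex.conj_conj _) rfl (Complex.conj_conj _)
      (hPne i j hi hj hij) (hPne k i hk hi (Ne.symm hik)) (hPne k j hk hj (Ne.symm hjk))]
    rw [hP, hP, hP, ← pow_add, ← pow_add]
    exact hprim.pow_eq_one_iff_dvd _
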